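/- Let η > 0 be a real number, let λ₀ : ℝ → ℝ be a continuous function, let Λ₀(t) = ∫₀ᵗ λ₀(v) dv, and for each natural number i define P_i(t) = ((∏_{k=0}^{i−1}(η⁻¹ + k))/i!) · (1 − exp(−ηΛ₀(t)))^i · (exp(−ηΛ₀(t)))^{η⁻¹}. For a fixed integer j ≥ 1, define F_{t_j}(t) = 1 − ∑_{i=0}^{j−1} P_i(t), the distribution function of the arrival time of the j-th shock. Then F_{t_j} is differentiable at every t and its derivative (the probability density of the j-th shock arrival time) is f_{t_j}(t) = (1 + η(j−1))·λ₀(t)·P_{j−1}(t). -/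

import Mathlib

/-!
Write `x = Λ₀(t)`. Since `exp(-ηx)^(1/η) = exp(-x)`, the function `P_i(t)` is `p_i(Λ₀ t)` with
`p_i(x) = C_i (1 - e^{-ηx})^i e^{-x}`, and the recursion `(i + 1) C_{i+1} = (η⁻¹ + i) C_i` of the
coefficients gives the pure-birth forward equations `p_i' = (1 + η(i-1)) p_{i-1} - (1 + ηi) p_i`
in the variable `x`. Summed over `i < j` they telescope to `-(1 + η(j-1)) p_{j-1}`, and the chain
rule with `Λ₀' = λ₀` yields the density.
-/

open Real Finset

theorem hasDerivAt_sum_range_of_forward_eq {𝕜 : Type*} [NontriviallyNormedField 𝕜]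
    {P : ℕ → 𝕜 → 𝕜} {g : ℕ → 𝕜} {x : 𝕜}
    (h_zero : HasDerivAt (P 0) (-(g 0 * P 0 x)) x)
    (h_succ : ∀ i, HasDerivAt (P (i + 1)) (g i * P i x - g (i + 1) * P (i + 1) x) x) :
    ∀ n, HasDerivAt (fun y => ∑ i ∈ range (n + 1), P i y) (-(g n * P n x)) x
  | 0 => by simpa using h_zero
  | n + 1 => by
    simp_rw [sum_range_succ _ (n + 1)]
    exact ((hasDerivAt_sum_range_of_forward_eq h_zero h_succ n).fun_add (h_succ n)).congr_deriv
      (by ring)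

/-- The generalized binomial coefficient `C^i_{a+i-1} = a (a+1) ⋯ (a+i-1) / i!`. -/
noncomputable def negBinomialCoeff (a : ℝ) (i : ℕ) : ℝ :=
  (∏ k ∈ range i, (a + k)) / i.factorial

theorem negBinomialCoeff_succ_mul (a : ℝ) (i : ℕ) :
    negBinomialCoeff a (i + 1) * (i + 1) = (a + i) * negBinomialCoeff a i := by
  unfold negBinomialCoeff
  rw [prod_range_succ, Nat.factorial_succ, Nat.cast_mul]
  field_simp
  push_cast
  ring

noncomputable def facilitationProb (η : ℝ) (i : ℕ) (x : ℝ) : ℝ :=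
  negBinomialCoeff η⁻¹ i * (1 - exp (-(η * x))) ^ i * exp (-x)

theorem facilitationProb_eq_rpow {η : ℝ} (hη : η ≠ 0) (i : ℕ) (x : ℝ) :
    facilitationProb η i x =
      negBinomialCoeff η⁻¹ i * (1 - exp (-(η * x))) ^ i * exp (-(η * x)) ^ η⁻¹ := by
  rw [facilitationProb, ← exp_mul]
  congr 3
  field_simp

theorem hasDerivAt_facilitationProb_zero (η x : ℝ) :
    HasDerivAt (facilitationProb η 0) (-facilitationProb η 0 x) x := by
  have h_zero : facilitationProb η 0 = fun y => exp (-y) := by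
    ext y
    simp [facilitationProb, negBinomialCoeff]
  rw [h_zero]
  simpa using (hasDerivAt_neg x).exp

theorem hasDerivAt_facilitationProb_succ {η : ℝ} (hη : η ≠ 0) (i : ℕ) (x : ℝ) :
    HasDerivAt (facilitationProb η (i + 1))
      ((1 + η * i) * facilitationProb η i x -
        (1 + η * (i + 1)) * facilitationProb η (i + 1) x) x := by
  have h_exp : HasDerivAt (fun y => exp (-(η * y))) (-η * exp (-(η * x))) x := by
    simpa [mul_comm] using ((hasDerivAt_id x).const_mul η).neg.exp
  have h_pow := (h_exp.const_sub 1).fun_pow (i + 1)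
  refine ((h_pow.const_mul (negBinomialCoeff η⁻¹ (i + 1))).fun_mul
    (hasDerivAt_neg x).exp).congr_deriv ?_
  have h_coeff := negBinomialCoeff_succ_mul η⁻¹ i
  simp only [facilitationProb, Nat.add_sub_cancel, Nat.cast_add, Nat.cast_one, pow_succ]
  linear_combination (η * exp (-x) * (1 - exp (-(η * x))) ^ i) * h_coeff +
    (negBinomialCoeff η⁻¹ i * exp (-x) * (1 - exp (-(η * x))) ^ i) * mul_inv_cancel₀ hη

/-- The distribution function of the arrival time of the `j`-th shock in the
facilitation model is differentiable, with density
`f_{t_j}(t) = (1 + η (j-1)) lam₀(t) P_{j-1}(t)`. -/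
theorem jth_shock_arrival_density
    (η : ℝ) (hη : 0 < η)
    (lam₀ : ℝ → ℝ) (hlam₀ : Continuous lam₀)
    (Λ₀ : ℝ → ℝ) (hΛ₀ : ∀ t, Λ₀ t = ∫ v in (0 : ℝ)..t, lam₀ v)
    (P : ℕ → ℝ → ℝ)
    (hP : ∀ i t, P i t =
      ((∏ k ∈ Finset.range i, (η⁻¹ + (k : ℝ))) / (Nat.factorial i : ℝ)) *
        (1 - Real.exp (-(η * Λ₀ t))) ^ i * (Real.exp (-(η * Λ₀ t))) ^ (η⁻¹))
    (j : ℕ) (hj : 1 ≤ j)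
    (F : ℝ → ℝ) (hF : ∀ t, F t = 1 - ∑ i ∈ Finset.range j, P i t) :
    ∀ t : ℝ, HasDerivAt F ((1 + η * ((j : ℝ) - 1)) * lam₀ t * P (j - 1) t) t := by
  intro t
  have hP_comp : ∀ i s, P i s = facilitationProb η i (Λ₀ s) := fun i s => by
    rw [hP, facilitationProb_eq_rpow hη.ne', negBinomialCoeff]
  have hΛ₀_deriv : HasDerivAt Λ₀ (lam₀ t) t := by
    rw [funext hΛ₀]
    exact (hlam₀.integral_hasStrictDerivAt 0 t).hasDerivAt
  obtain ⟨n, rfl⟩ : ∃ n, j = n + 1 := ⟨j - 1, by omega⟩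
  have h_sum := (hasDerivAt_sum_range_of_forward_eq (g := fun i => 1 + η * i)
    (by simpa using hasDerivAt_facilitationProb_zero η (Λ₀ t))
    (fun i => by simpa using hasDerivAt_facilitationProb_succ hη.ne' i (Λ₀ t)) n).comp t
    hΛ₀_deriv
  have hF_comp : F = fun s => 1 - ∑ i ∈ range (n + 1), facilitationProb η i (Λ₀ s) := by
    ext s
    simp only [hF, hP_comp]
  rw [hF_comp]
  refine (h_sum.const_sub 1).congr_deriv ?_
  rw [hP_comp, Nat.add_sub_cancel]
  push_cast
  ring
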